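/- arXiv:2111.04895 — 5 statements merged into one kernel-verified Lean document; each statement's English description precedes it below -/
import Mathlib

section
/- For the multiway system with rule n ↦ {2·n, n + 1} started from 1, the number of distinct values reachable in at most t steps equals Fib(t + 3) − 1, where Fib is the Fibonacci sequence with Fib(0) = 0, Fib(1) = 1. (So the number of distinct numbers reached grows like the golden ratio φ to the power t.) -/
def cost : ℕ → ℕ
  | 0 => 0
  | 1 => 0
  | n + 2 => cost ((n + 2) / 2) + (if (n + 2) % 2 = 0 then 1 else 2)

lemma cost_eq (n : ℕ) (h : 2 ≤ n) :
    cost n = cost (n / 2) + (if n % 2 = 0 then 1 else 2) := by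
  obtain ⟨m, rfl⟩ : ∃ m, n = m + 2 := ⟨n - 2, by omega⟩
  rw [cost]

lemma cost_two_mul (k : ℕ) (hk : 0 < k) : cost (2 * k) = cost k + 1 := by
  rw [cost_eq (2 * k) (by omega)]
  simp [Nat.mul_div_cancel_left, Nat.mul_mod_right]

lemma cost_two_mul_add_one (k : ℕ) (hk : 0 < k) : cost (2 * k + 1) = cost k + 2 := by
  rw [cost_eq (2 * k + 1) (by omega)]
  have h1 : (2 * k + 1) / 2 = k := by omega
  have h2 : (2 * k + 1) % 2 = 1 := by omega
  simp [h1, h2]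

lemma cost_succ_le (n : ℕ) (hn : 0 < n) : cost (n + 1) ≤ cost n + 1 := by
  induction n using Nat.strong_induction_on with
  | _ n ih =>
    rcases Nat.even_or_odd n with ⟨j, hj⟩ | ⟨j, hj⟩
    · -- n = 2j even, n+1 odd
      subst hj
      have hj0 : 0 < j := by omega
      rw [show j + j = 2 * j by ring]
      rw [cost_two_mul_add_one j hj0, cost_two_mul j hj0]
      try omega
    · -- n = 2j+1 odd, n+1 = 2(j+1)
      subst hj
      rcases Nat.eq_zero_or_pos j with rfl | hj0
      · simp [show (2:ℕ)*0+1+1 = 2*1 by ring, cost_two_mul 1 one_pos]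
      · have h1 : 2 * j + 1 + 1 = 2 * (j + 1) := by ring
        rw [h1, cost_two_mul (j+1) (by omega), cost_two_mul_add_one j hj0]
        have := ih j (by omega) hj0
        omega

lemma le_two_pow_cost (m : ℕ) (hm : 0 < m) : m ≤ 2 ^ cost m := by
  induction m using Nat.strong_induction_on with
  | _ m ih =>
    rcases Nat.lt_or_ge m 2 with h | h
    · interval_cases m <;> simp [cost]
    · rcases Nat.even_or_odd m with ⟨k, hk⟩ | ⟨k, hk⟩
      · subst hk
        rw [show k + k = 2 * k by ring]
        have hk0 : 0 < k := by omega
        rw [cost_two_mul k hk0, pow_succ]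
        have := ih k (by omega) hk0
        omega
      · subst hk
        have hk0 : 0 < k := by omega
        rw [cost_two_mul_add_one k hk0, pow_succ, pow_succ]
        have := ih k (by omega) hk0
        have : 1 ≤ 2 ^ cost k := Nat.one_le_two_pow
        omega

lemma cost_pos (m : ℕ) (h : 2 ≤ m) : 1 ≤ cost m := by
  rw [cost_eq m h]
  split <;> omega

lemma two_le_cost (m : ℕ) (h : 3 ≤ m) : 2 ≤ cost m := by
  rw [cost_eq m (by omega)]
  have h2 : 2 ≤ m / 2 ∨ m % 2 = 1 := by omega
  rcases h2 with h2 | h2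
  · have := cost_pos (m / 2) h2
    split <;> omega
  · simp [h2]

/-- Values reachable from 1 in exactly `t` steps of the multiway system `n ↦ {2n, n + 1}`. -/
def ReachIn : ℕ → Set ℕ
  | 0 => {1}
  | t + 1 => {m | ∃ k ∈ ReachIn t, m = 2 * k ∨ m = k + 1}

lemma reachIn_sub (s : ℕ) : ∀ m ∈ ReachIn s, 0 < m ∧ cost m ≤ s := by
  induction s with
  | zero => intro m hm; rw [ReachIn] at hm; simp at hm; subst hm; simp [cost]
  | succ s ih =>
    rintro m ⟨k, hk, h | h⟩ <;> obtain ⟨hk0, hkc⟩ := ih k hk <;> subst h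
    · rw [cost_two_mul k hk0]; omega
    · have := cost_succ_le k hk0; omega

lemma mem_reachIn_cost (m : ℕ) (hm : 0 < m) : m ∈ ReachIn (cost m) := by
  induction m using Nat.strong_induction_on with
  | _ m ih =>
    rcases Nat.lt_or_ge m 2 with h | h
    · interval_cases m
      show (1:ℕ) ∈ ReachIn (cost 1); simp [cost, ReachIn]
    · rcases Nat.even_or_odd m with ⟨k, hk⟩ | ⟨k, hk⟩
      · subst hk
        rw [show k + k = 2 * k by ring]
        have hk0 : 0 < k := by omega
        rw [cost_two_mul k hk0, ReachIn]
        exact ⟨k, ih k (by omega) hk0, Or.inl rfl⟩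
      · subst hk
        have hk0 : 0 < k := by omega
        have h2k : (2 * k) ∈ ReachIn (cost k + 1) := by
          rw [ReachIn]; exact ⟨k, ih k (by omega) hk0, Or.inl rfl⟩
        rw [cost_two_mul_add_one k hk0, show cost k + 2 = (cost k + 1) + 1 by ring, ReachIn]
        exact ⟨2 * k, h2k, Or.inr rfl⟩

/-- Reachable within `t` steps. -/
lemma union_reachIn_eq (t : ℕ) :
    (⋃ s ∈ Finset.range (t + 1), ReachIn s) = {m | 0 < m ∧ cost m ≤ t} := by
  ext m
  simp only [Set.mem_iUnion, Finset.mem_range, Set.mem_setOf_eq]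
  constructor
  · rintro ⟨s, hs, hm⟩
    obtain ⟨h1, h2⟩ := reachIn_sub s m hm
    exact ⟨h1, by omega⟩
  · rintro ⟨h1, h2⟩
    exact ⟨cost m, by omega, mem_reachIn_cost m h1⟩

def F (t : ℕ) : Finset ℕ := (Finset.range (2 ^ t + 1)).filter (fun m => 0 < m ∧ cost m ≤ t)

lemma mem_F (t m : ℕ) : m ∈ F t ↔ 0 < m ∧ cost m ≤ t := by
  simp only [F, Finset.mem_filter, Finset.mem_range]
  constructor
  · rintro ⟨_, h⟩; exact h
  · rintro ⟨h1, h2⟩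
    refine ⟨?_, h1, h2⟩
    have := le_two_pow_cost m h1
    have : (2:ℕ) ^ cost m ≤ 2 ^ t := Nat.pow_le_pow_right (by norm_num) h2
    omega

lemma F_card_rec (t : ℕ) : (F (t + 2)).card = (F (t + 1)).card + (F t).card + 1 := by
  have hF : F (t + 2) = insert 1 ((F (t + 1)).image (fun k => 2 * k) ∪
      (F t).image (fun k => 2 * k + 1)) := by
    ext m
    simp only [mem_F, Finset.mem_insert, Finset.mem_union, Finset.mem_image]
    constructor
    · rintro ⟨h1, h2⟩
      rcases Nat.lt_or_ge m 2 with h | h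
      · left; omega
      · right
        rcases Nat.even_or_odd m with ⟨k, hk⟩ | ⟨k, hk⟩
        · left
          refine ⟨k, ?_, by omega⟩
          have hk0 : 0 < k := by omega
          rw [show m = 2 * k by omega, cost_two_mul k hk0] at h2
          exact ⟨hk0, by omega⟩
        · right
          refine ⟨k, ?_, by omega⟩
          have hk0 : 0 < k := by omega
          rw [show m = 2 * k + 1 by omega, cost_two_mul_add_one k hk0] at h2
          exact ⟨hk0, by omega⟩
    · rintro (rfl | ⟨k, hk, rfl⟩ | ⟨k, hk, rfl⟩)
      · simp [cost]
      · rw [cost_two_mul k hk.1]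
        exact ⟨by omega, by omega⟩
      · rw [cost_two_mul_add_one k hk.1]
        exact ⟨by omega, by omega⟩
  rw [hF]
  rw [Finset.card_insert_of_notMem, Finset.card_union_of_disjoint,
    Finset.card_image_of_injective _ (fun a b h => by omega),
    Finset.card_image_of_injective _ (fun a b h => by omega)]
  · rw [Finset.disjoint_left]
    intro m hm hm'
    simp only [Finset.mem_image] at hm hm'
    obtain ⟨k, _, rfl⟩ := hm
    obtain ⟨j, _, hj⟩ := hm'
    omega
  · simp only [Finset.mem_union, Finset.mem_image, mem_F]
    rintro (⟨k, hk, h⟩ | ⟨k, hk, h⟩) <;> omega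

lemma F_card (t : ℕ) : (F t).card = Nat.fib (t + 3) - 1 := by
  induction t using Nat.strong_induction_on with
  | _ t ih =>
    match t with
    | 0 =>
      have : F 0 = {1} := by
        ext m
        rw [mem_F]
        simp only [Finset.mem_singleton]
        constructor
        · rintro ⟨h1, h2⟩
          by_contra hne
          have := cost_pos m (by omega)
          omega
        · rintro rfl; simp [cost]
      rw [this]; rfl
    | 1 =>
      have : F 1 = {1, 2} := by
        ext m
        rw [mem_F]
        simp only [Finset.mem_insert, Finset.mem_singleton]
        constructor
        · rintro ⟨h1, h2⟩
          by_contra hne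
          have := two_le_cost m (by omega)
          omega
        · rintro (rfl | rfl)
          · simp [cost]
          · refine ⟨by omega, ?_⟩
            rw [show (2:ℕ) = 2 * 1 by norm_num, cost_two_mul 1 one_pos]
            simp [cost]
      rw [this]; rfl
    | t + 2 =>
      rw [F_card_rec t, ih (t + 1) (by omega), ih t (by omega)]
      have e1 : t + 2 + 3 = t + 3 + 2 := by omega
      have e2 : t + 1 + 3 = t + 3 + 1 := by omega
      rw [e1, e2]
      have h1 : Nat.fib (t + 3 + 2) = Nat.fib (t + 3) + Nat.fib (t + 3 + 1) :=
        Nat.fib_add_two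
      have h2 : 0 < Nat.fib (t + 3) := Nat.fib_pos.2 (by omega)
      have h3 : 0 < Nat.fib (t + 3 + 1) := Nat.fib_pos.2 (by omega)
      omega

/-- For the rule `n ↦ {2n, n + 1}` started from 1, the number of distinct values reachable
in at most `t` steps is `Fib (t + 3) - 1`. -/
theorem card_reachable_eq_fib (t : ℕ) :
    Set.ncard (⋃ s ∈ Finset.range (t + 1), ReachIn s) = Nat.fib (t + 3) - 1 := by
  rw [union_reachIn_eq t]
  have : {m | 0 < m ∧ cost m ≤ t} = ↑(F t) := by
    ext m; simp [mem_F]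
  rw [this, Set.ncard_coe_finset, F_card]
end

section
/- Let R ⊆ ℕ be the smallest set containing 0 and closed under the maps n ↦ 2·n + 1 and n ↦ 3·n + 1. If u ∈ R and v ∈ R satisfy 2·u + 1 = 3·v + 1 and 2·u + 1 > 1, then 2·u + 1 ≡ 31 (mod 144). That is, every nondegenerate merge value in the multiway graph of the rule n ↦ {2n + 1, 3n + 1} started from 0 is congruent to 31 modulo 144. -/
/-- The smallest subset of `ℕ` containing 0 and closed under `n ↦ 2n + 1` and `n ↦ 3n + 1`. -/
inductive Gen : ℕ → Prop
  | zero : Gen 0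
  | two {n : ℕ} : Gen n → Gen (2 * n + 1)
  | three {n : ℕ} : Gen n → Gen (3 * n + 1)

/-- Residues mod 144 reachable by the rule from 0. -/
def Slist : List ℕ :=
  [0, 1, 3, 4, 7, 9, 10, 13, 15, 19, 21, 22, 27, 28, 31, 39, 40, 43, 45, 46, 49,
   55, 57, 58, 63, 64, 67, 76, 79, 81, 82, 85, 87, 91, 93, 94, 99, 100, 103, 111,
   112, 115, 117, 118, 121, 127, 129, 130, 135, 136, 139]

lemma Slist_closed : ∀ a ∈ Slist, (2 * a + 1) % 144 ∈ Slist ∧ (3 * a + 1) % 144 ∈ Slist := by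
  decide

lemma mem_Slist {n₀ : ℕ} (hn : Gen n₀) : n₀ % 144 ∈ Slist := by
  induction hn with
  | zero => decide
  | two h ih =>
      rename_i n
      have := (Slist_closed _ ih).1
      have e : (2 * n + 1) % 144 = (2 * (n % 144) + 1) % 144 := by omega
      rwa [e]
  | three h ih =>
      rename_i n
      have := (Slist_closed _ ih).2
      have e : (3 * n + 1) % 144 = (3 * (n % 144) + 1) % 144 := by omega
      rwa [e]

lemma Gen_mod_zero {n : ℕ} (hn : Gen n) (h : n % 144 = 0) : n = 0 := by
  cases hn with
  | zero => rfl
  | two h' => omega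
  | three h' => omega

lemma Slist_merge : ∀ a ∈ Slist, ∀ b ∈ Slist, a ≠ 0 → b ≠ 0 →
    (2 * a) % 144 = (3 * b) % 144 → (2 * a + 1) % 144 = 31 := by
  decide

/-- Every nondegenerate merge value in the multiway graph of `n ↦ {2n + 1, 3n + 1}`
started from 0 is congruent to 31 modulo 144. -/
theorem merge_value_mod_144 (u v : ℕ) (hu : Gen u) (hv : Gen v)
    (h : 2 * u + 1 = 3 * v + 1) (h1 : 1 < 2 * u + 1) :
    (2 * u + 1) % 144 = 31 := by
  have hu0 : u ≠ 0 := by omega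
  have hv0 : v ≠ 0 := by omega
  have ha := mem_Slist hu
  have hb := mem_Slist hv
  have ha0 : u % 144 ≠ 0 := fun e => hu0 (Gen_mod_zero hu e)
  have hb0 : v % 144 ≠ 0 := fun e => hv0 (Gen_mod_zero hv e)
  have hmod : (2 * (u % 144)) % 144 = (3 * (v % 144)) % 144 := by omega
  have := Slist_merge _ ha _ hb ha0 hb0 hmod
  have e : (2 * u + 1) % 144 = (2 * (u % 144) + 1) % 144 := by omega
  rwa [e]
end

section
/- Let R ⊆ ℕ be the smallest set containing 0 and closed under the maps n ↦ 2·n + 1 and n ↦ 3·n + 1. If u ∈ R and v ∈ R satisfy 2·u + 1 = 3·v + 1 and 2·u + 1 > 1, then 2·u + 1 ≡ 7 (mod 12). That is, every nondegenerate merge value in the multiway graph of the rule n ↦ {2n + 1, 3n + 1} started from 0 is congruent to 7 modulo 12. -/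
/-- Every nondegenerate merge value in the multiway graph of `n ↦ {2n + 1, 3n + 1}`
started from 0 is congruent to 7 modulo 12. -/
theorem merge_value_mod_12 (u v : ℕ) (hu : Gen u) (hv : Gen v)
    (h : 2 * u + 1 = 3 * v + 1) (h1 : 1 < 2 * u + 1) :
    (2 * u + 1) % 12 = 7 := by
  cases hu with
  | zero => omega
  | two hn => omega
  | three hn => omega
end

section
/- Let a, b be positive integers and let Reach be the reflexive–transitive closure of the relation m → m' defined by m' = a·m or m' = m + b on the natural numbers. Then this rewriting system is confluent: for all n, x, y, if Reach n x and Reach n y, then there exists z with Reach x z and Reach y z. -/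
section Aux

variable (a b : ℕ)

private lemma reach_add (m : ℕ) : ∀ s : ℕ,
    Relation.ReflTransGen (fun m m' => m' = a * m ∨ m' = m + b) m (m + s * b) := by
  intro s
  induction s with
  | zero => simpa using Relation.ReflTransGen.refl
  | succ s ih =>
    refine ih.tail (Or.inr ?_)
    ring

private lemma reach_mul (m : ℕ) : ∀ j : ℕ,
    Relation.ReflTransGen (fun m m' => m' = a * m ∨ m' = m + b) m (a ^ j * m) := by
  intro j
  induction j with
  | zero => simpa using Relation.ReflTransGen.refl
  | succ j ih =>
    refine ih.tail (Or.inl ?_)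
    ring

private lemma reach_affine (m j s : ℕ) :
    Relation.ReflTransGen (fun m m' => m' = a * m ∨ m' = m + b) m (a ^ j * m + s * b) :=
  (reach_mul a b m j).trans (reach_add a b (a ^ j * m) s)

private lemma reach_shape {n x : ℕ}
    (h : Relation.ReflTransGen (fun m m' => m' = a * m ∨ m' = m + b) n x) :
    ∃ k s : ℕ, x = a ^ k * n + s * b := by
  induction h with
  | refl => exact ⟨0, 0, by simp⟩
  | tail _ hstep ih =>
    obtain ⟨k, s, rfl⟩ := ih
    rcases hstep with h | h
    · exact ⟨k + 1, a * s, by rw [h]; ring⟩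
    · exact ⟨k, s + 1, by rw [h]; ring⟩

end Aux

/-- The multiway system `n ↦ {a*n, n + b}` (for positive `a, b`) is confluent. -/
theorem affine_rule_confluent (a b : ℕ) (ha : 0 < a) (hb : 0 < b) :
    ∀ n x y : ℕ,
      Relation.ReflTransGen (fun m m' => m' = a * m ∨ m' = m + b) n x →
      Relation.ReflTransGen (fun m m' => m' = a * m ∨ m' = m + b) n y →
      ∃ z : ℕ,
        Relation.ReflTransGen (fun m m' => m' = a * m ∨ m' = m + b) x z ∧
        Relation.ReflTransGen (fun m m' => m' = a * m ∨ m' = m + b) y z := by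
  intro n x y hx hy
  obtain ⟨k, s, rfl⟩ := reach_shape a b hx
  obtain ⟨l, t, rfl⟩ := reach_shape a b hy
  set M : ℕ := max (a ^ l * s) (a ^ k * t) with hM
  refine ⟨a ^ (k + l) * n + M * b, ?_, ?_⟩
  · have h1 : a ^ l * (a ^ k * n + s * b) + (M - a ^ l * s) * b
        = a ^ (k + l) * n + M * b := by
      have hle : a ^ l * s ≤ M := le_max_left _ _
      zify [hle]
      rw [pow_add]
      ring
    have := reach_affine a b (a ^ k * n + s * b) l (M - a ^ l * s)
    rwa [h1] at this
  · have h1 : a ^ k * (a ^ l * n + t * b) + (M - a ^ k * t) * b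
        = a ^ (k + l) * n + M * b := by
      have hle : a ^ k * t ≤ M := le_max_right _ _
      zify [hle]
      rw [pow_add]
      ring
    have := reach_affine a b (a ^ l * n + t * b) k (M - a ^ k * t)
    rwa [h1] at this
end

section
/- Let a, b, c be positive integers and let Reach be the reflexive–transitive closure of the relation m → m' defined by m' = a·m, or m' = b·m, or m' = m + c on the natural numbers. Then this rewriting system is confluent: for all n, x, y, if Reach n x and Reach n y, then there exists z with Reach x z and Reach y z. -/
private def Rul (a b c : ℕ) : ℕ → ℕ → Prop :=
  fun m m' => m' = a * m ∨ m' = b * m ∨ m' = m + c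

private lemma reach_addc (a b c m t : ℕ) :
    Relation.ReflTransGen (Rul a b c) m (m + t * c) := by
  induction t with
  | zero => simpa using Relation.ReflTransGen.refl (r := Rul a b c)
  | succ t ih =>
      refine ih.tail ?_
      right; right; ring

private lemma reach_powa (a b c m k : ℕ) :
    Relation.ReflTransGen (Rul a b c) m (a ^ k * m) := by
  induction k with
  | zero => simpa using Relation.ReflTransGen.refl (r := Rul a b c)
  | succ k ih =>
      refine ih.tail ?_
      left; ring

private lemma reach_powb (a b c m l : ℕ) :
    Relation.ReflTransGen (Rul a b c) m (b ^ l * m) := by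
  induction l with
  | zero => simpa using Relation.ReflTransGen.refl (r := Rul a b c)
  | succ l ih =>
      refine ih.tail ?_
      right; left; ring

private lemma reach_comb (a b c m k l t : ℕ) :
    Relation.ReflTransGen (Rul a b c) m (a ^ k * b ^ l * m + t * c) := by
  have h1 := reach_powa a b c m k
  have h2 := reach_powb a b c (a ^ k * m) l
  have h3 := reach_addc a b c (b ^ l * (a ^ k * m)) t
  have := (h1.trans h2).trans h3
  have he : b ^ l * (a ^ k * m) + t * c = a ^ k * b ^ l * m + t * c := by ring
  rwa [he] at this

private lemma residue (a b c n x : ℕ)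
    (h : Relation.ReflTransGen (Rul a b c) n x) :
    ∃ i j, x % c = (a ^ i * b ^ j * n) % c := by
  induction h with
  | refl => exact ⟨0, 0, by simp⟩
  | @tail m m' _ hstep ih =>
      obtain ⟨i, j, hij⟩ := ih
      rcases hstep with h1 | h1 | h1
      · refine ⟨i + 1, j, ?_⟩
        subst h1
        rw [Nat.mul_mod, hij, ← Nat.mul_mod,
          show a * (a ^ i * b ^ j * n) = a ^ (i + 1) * b ^ j * n by ring]
      · refine ⟨i, j + 1, ?_⟩
        subst h1
        rw [Nat.mul_mod, hij, ← Nat.mul_mod,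
          show b * (a ^ i * b ^ j * n) = a ^ i * b ^ (j + 1) * n by ring]
      · refine ⟨i, j, ?_⟩
        subst h1
        rw [Nat.add_mod_right, hij]

/-- The multiway system `n ↦ {a*n, b*n, n + c}` (for positive `a, b, c`) is confluent. -/
theorem three_rule_confluent (a b c : ℕ) (ha : 0 < a) (hb : 0 < b) (hc : 0 < c) :
    ∀ n x y : ℕ,
      Relation.ReflTransGen (fun m m' => m' = a * m ∨ m' = b * m ∨ m' = m + c) n x →
      Relation.ReflTransGen (fun m m' => m' = a * m ∨ m' = b * m ∨ m' = m + c) n y →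
      ∃ z : ℕ,
        Relation.ReflTransGen (fun m m' => m' = a * m ∨ m' = b * m ∨ m' = m + c) x z ∧
        Relation.ReflTransGen (fun m m' => m' = a * m ∨ m' = b * m ∨ m' = m + c) y z := by
  intro n x y hx hy
  have hx' : Relation.ReflTransGen (Rul a b c) n x := hx
  have hy' : Relation.ReflTransGen (Rul a b c) n y := hy
  obtain ⟨i, j, hxr⟩ := residue a b c n x hx'
  obtain ⟨k, l, hyr⟩ := residue a b c n y hy'
  set P := a ^ k * b ^ l * x with hP
  set Q := a ^ i * b ^ j * y with hQ
  have hmod : P % c = Q % c := by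
    have h1 : P % c = (a ^ k * b ^ l * (a ^ i * b ^ j * n)) % c := by
      rw [hP, Nat.mul_mod, hxr, ← Nat.mul_mod]
    have h2 : Q % c = (a ^ i * b ^ j * (a ^ k * b ^ l * n)) % c := by
      rw [hQ, Nat.mul_mod, hyr, ← Nat.mul_mod]
    rw [h1, h2]
    ring_nf
  have hdP := Nat.div_add_mod P c
  have hdQ := Nat.div_add_mod Q c
  have hxP : Relation.ReflTransGen (Rul a b c) x P := by
    have := reach_comb a b c x k l 0
    simpa [hP] using this
  have hyQ : Relation.ReflTransGen (Rul a b c) y Q := by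
    have := reach_comb a b c y i j 0
    simpa [hQ] using this
  rcases le_total P Q with hle | hle
  · refine ⟨Q, ?_, hyQ⟩
    have ht : Q = P + (Q / c - P / c) * c := by
      have h1 : P / c ≤ Q / c := Nat.div_le_div_right hle
      have h2 : (Q / c - P / c) * c = Q / c * c - P / c * c := Nat.sub_mul _ _ _
      have h3 : Q / c * c = c * (Q / c) := Nat.mul_comm _ _
      have h4 : P / c * c = c * (P / c) := Nat.mul_comm _ _
      have h5 : c * (P / c) ≤ c * (Q / c) := Nat.mul_le_mul_left c h1
      omega
    have := reach_comb a b c x k l (Q / c - P / c)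
    rw [← hP, ← ht] at this
    exact this
  · refine ⟨P, hxP, ?_⟩
    have ht : P = Q + (P / c - Q / c) * c := by
      have h1 : Q / c ≤ P / c := Nat.div_le_div_right hle
      have h2 : (P / c - Q / c) * c = P / c * c - Q / c * c := Nat.sub_mul _ _ _
      have h3 : P / c * c = c * (P / c) := Nat.mul_comm _ _
      have h4 : Q / c * c = c * (Q / c) := Nat.mul_comm _ _
      have h5 : c * (Q / c) ≤ c * (P / c) := Nat.mul_le_mul_left c h1
      omega
    have := reach_comb a b c y i j (P / c - Q / c)
    rw [← hQ, ← ht] at this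
    exact this
end
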